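/- arXiv:2501.11355 — 3 statements merged into one kernel-verified Lean document; each statement's English description precedes it below -/
import Mathlib

section
/- Suppose binary sequences u, v, w : ℕ → {0,1} satisfy the logic constraint u(t-1) - u(t) + v(t) - w(t) = 0 for all t ≥ 1. If the minimum up-time constraint ∑_{s=t-Tu+1}^{t} v(s) ≤ u(t) holds for all t ≥ Tu, then whenever v(t₀) = 1 for some t₀ with t₀ + Tu - 1 ≤ T, we have u(s) = 1 for all s with t₀ ≤ s ≤ t₀ + Tu - 1. -/
/-- Minimum up-time: if the logic constraint and the minimum up-time
constraint hold, then a start-up at `t₀` keeps the unit on during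
`[t₀, t₀ + Tu - 1]`. -/
theorem min_up_time (T Tu : ℕ) (u v w : ℕ → ℤ)
    (hTu : 1 ≤ Tu)
    (hu : ∀ t, u t = 0 ∨ u t = 1)
    (hv : ∀ t, v t = 0 ∨ v t = 1)
    (hw : ∀ t, w t = 0 ∨ w t = 1)
    (hlogic : ∀ t, 1 ≤ t → t ≤ T → u (t - 1) - u t + v t - w t = 0)
    (hup : ∀ t, Tu ≤ t → t ≤ T → ∑ s ∈ Finset.Icc (t - Tu + 1) t, v s ≤ u t) :
    ∀ t₀, 1 ≤ t₀ → t₀ + Tu - 1 ≤ T → v t₀ = 1 →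
      ∀ s, t₀ ≤ s → s ≤ t₀ + Tu - 1 → u s = 1 := by
  intro t₀ ht₀ hT hv₀ s hs1 hs2
  have hvnn : ∀ x, (0:ℤ) ≤ v x := fun x => by rcases hv x with h|h <;> omega
  have key : ∀ t, Tu ≤ t → t ≤ T → t ≤ t₀ + Tu - 1 → t₀ ≤ t → u t = 1 := by
    intro t h1 h2 h3 h4
    have hmem : t₀ ∈ Finset.Icc (t - Tu + 1) t := by
      simp only [Finset.mem_Icc]; omega
    have hle := Finset.single_le_sum (f := v) (fun i _ => hvnn i) hmem
    have h5 := hup t h1 h2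
    rcases hu t with h|h <;> omega
  by_cases hc : Tu ≤ s
  · exact key s hc (le_trans hs2 hT) hs2 hs1
  · push_neg at hc
    have hTuT : Tu ≤ T := by omega
    have huTu : u Tu = 1 := key Tu le_rfl hTuT (by omega) (by omega)
    have hsumTu := hup Tu le_rfl hTuT
    have aux : ∀ k m, m + k = Tu → t₀ ≤ m → u m = 1 := by
      intro k
      induction k with
      | zero =>
        intro m hm _
        have : m = Tu := by omega
        rw [this]; exact huTu
      | succ k ih =>
        intro m hm hm2
        have hnext : u (m+1) = 1 := ih (m+1) (by omega) (by omega)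
        have hlog := hlogic (m+1) (by omega) (by omega)
        rw [Nat.add_sub_cancel] at hlog
        rcases hv (m+1) with hv1|hv1
        · rcases hw (m+1) with hw1|hw1 <;> rcases hu m with h|h <;> omega
        · rcases hw (m+1) with hw1|hw1
          · exfalso
            have hne : t₀ ≠ m + 1 := by omega
            have hsub : ({t₀, m+1} : Finset ℕ) ⊆ Finset.Icc (Tu - Tu + 1) Tu := by
              intro x hx
              simp only [Finset.mem_insert, Finset.mem_singleton] at hx
              simp only [Finset.mem_Icc]
              rcases hx with h|h <;> omega
            have hle := Finset.sum_le_sum_of_subset_of_nonneg hsub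
              (fun i _ _ => hvnn i)
            rw [Finset.sum_pair hne, hv₀, hv1] at hle
            omega
          · rcases hu m with h|h <;> omega
    exact aux (Tu - s) s (by omega) hs1
end

section
/- Suppose binary sequences u, v, w : ℕ → {0,1} satisfy u(t-1) - u(t) + v(t) - w(t) = 0 for all t ≥ 1, and the minimum down-time constraint ∑_{s=t-Td+1}^{t} w(s) ≤ 1 - u(t) for all t ≥ Td. Then whenever w(t₀) = 1 for some t₀ with t₀ + Td - 1 ≤ T, we have u(s) = 0 for all s with t₀ ≤ s ≤ t₀ + Td - 1. -/
/-- Minimum down-time: if the logic constraint and the minimum down-time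
constraint hold, then a shut-down at `t₀` keeps the unit off during
`[t₀, t₀ + Td - 1]`. -/
theorem min_down_time (T Td : ℕ) (u v w : ℕ → ℤ)
    (hTd : 1 ≤ Td)
    (hu : ∀ t, u t = 0 ∨ u t = 1)
    (hv : ∀ t, v t = 0 ∨ v t = 1)
    (hw : ∀ t, w t = 0 ∨ w t = 1)
    (hlogic : ∀ t, 1 ≤ t → t ≤ T → u (t - 1) - u t + v t - w t = 0)
    (hdown : ∀ t, Td ≤ t → t ≤ T →
      ∑ s ∈ Finset.Icc (t - Td + 1) t, w s ≤ 1 - u t) :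
    ∀ t₀, 1 ≤ t₀ → t₀ + Td - 1 ≤ T → w t₀ = 1 →
      ∀ s, t₀ ≤ s → s ≤ t₀ + Td - 1 → u s = 0 := by
  intro t₀ ht₀ hle hwt₀ s hs1 hs2
  set e := t₀ + Td - 1 with he
  have het₀ : t₀ ≤ e := by omega
  have hTde : Td ≤ e := by omega
  have hIcc : Finset.Icc (e - Td + 1) e = Finset.Icc t₀ e := by
    congr 1; omega
  have hsum := hdown e hTde hle
  rw [hIcc] at hsum
  have hsplit : w t₀ + ∑ r ∈ (Finset.Icc t₀ e).erase t₀, w r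
      = ∑ r ∈ Finset.Icc t₀ e, w r :=
    Finset.add_sum_erase _ _ (Finset.mem_Icc.mpr ⟨le_refl _, het₀⟩)
  have hnonneg : ∀ r ∈ (Finset.Icc t₀ e).erase t₀, 0 ≤ w r := by
    intro r _; rcases hw r with h | h <;> simp [h]
  have herase_nonneg : 0 ≤ ∑ r ∈ (Finset.Icc t₀ e).erase t₀, w r :=
    Finset.sum_nonneg hnonneg
  have hue : u e = 0 := by
    rcases hu e with h | h
    · exact h
    · exfalso; omega
  have hz : ∑ r ∈ (Finset.Icc t₀ e).erase t₀, w r = 0 := by omega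
  have hw0 : ∀ r, t₀ < r → r ≤ e → w r = 0 := by
    intro r hr1 hr2
    exact (Finset.sum_eq_zero_iff_of_nonneg hnonneg).mp hz r
      (by simp [Finset.mem_erase, Finset.mem_Icc]; omega)
  have key : ∀ k, k ≤ e - t₀ → u (e - k) = 0 := by
    intro k
    induction k with
    | zero => intro _; simpa using hue
    | succ n ih =>
      intro hk
      have hlog := hlogic (e - n) (by omega) (by omega)
      have hwn : w (e - n) = 0 := hw0 (e - n) (by omega) (by omega)
      have hun : u (e - n) = 0 := ih (by omega)
      rw [show e - n - 1 = e - (n + 1) by omega] at hlog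
      rcases hu (e - (n + 1)) with h | h
      · exact h
      · rcases hv (e - n) with h' | h' <;> omega
  have hk := key (e - s) (by omega)
  rwa [show e - (e - s) = s by omega] at hk
end

section
/- If binaries u_g and reserves P^res_g satisfy P^res_g ≤ (P_max,g − P_min,g)·u_g for all g (reserve only from committed units), and a demand-plus-reserve feasibility condition ∑_g P_max,g·u_g ≥ P^D + P^res_r holds together with ∑_g P_min,g·u_g ≤ P^D, then there exist powers P_g with P_min,g·u_g ≤ P_g and P_g + P^res_g' ≤ P_max,g·u_g for some reserves P^res_g' ≥ 0 with ∑ P^res_g' ≥ P^res_r and ∑_g P_g = P^D. -/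
/-- Feasibility lemma for the single-period, single-bus relaxation: if committed
minimums are below demand and committed maximums are above demand plus reserve,
then a feasible dispatch with adequate reserve exists. -/
theorem dispatch_feasibility (n : ℕ)
    (u Pres Pmin Pmax : Fin n → ℝ) (PD Presr : ℝ)
    (hPminPos : ∀ g, 0 < Pmin g) (hle : ∀ g, Pmin g ≤ Pmax g)
    (hbin : ∀ g, u g = 0 ∨ u g = 1)
    (hres : ∀ g, Pres g ≤ (Pmax g - Pmin g) * u g)
    (hPD : 0 ≤ PD) (hPresr : 0 ≤ Presr)
    (hmax : PD + Presr ≤ ∑ g, Pmax g * u g)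
    (hmin : ∑ g, Pmin g * u g ≤ PD) :
    ∃ P Pres' : Fin n → ℝ,
      (∀ g, Pmin g * u g ≤ P g ∧ P g + Pres' g ≤ Pmax g * u g ∧ 0 ≤ Pres' g) ∧
      Presr ≤ ∑ g, Pres' g ∧
      ∑ g, P g = PD := by
  set a : Fin n → ℝ := fun g => Pmin g * u g with ha
  set d : Fin n → ℝ := fun g => Pmax g * u g - Pmin g * u g with hd
  have hd0 : ∀ g, 0 ≤ d g := by
    intro g
    have hu : 0 ≤ u g := by rcases hbin g with h | h <;> simp [h]
    have := hle g
    simp only [hd]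
    nlinarith
  set A := ∑ g, a g with hA
  set D := ∑ g, d g with hD
  have hsum : A + D = ∑ g, Pmax g * u g := by
    rw [hA, hD, ← Finset.sum_add_distrib]
    apply Finset.sum_congr rfl
    intro g _
    simp [ha, hd]
  have hD0 : 0 ≤ D := Finset.sum_nonneg fun g _ => hd0 g
  have hmax' : PD + Presr ≤ A + D := by rw [hsum]; exact hmax
  by_cases hDz : D = 0
  · refine ⟨a, fun _ => 0, fun g => ⟨le_refl _, ?_, le_refl _⟩, ?_, ?_⟩
    · have hdg : d g ≤ D := by
        rw [hD]
        exact Finset.single_le_sum (fun g _ => hd0 g) (Finset.mem_univ g)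
      have := hd0 g
      simp only [ha, hd] at *
      linarith
    · simp only [Finset.sum_const, smul_zero]
      linarith
    · rw [← hA]; linarith
  · have hDpos : 0 < D := lt_of_le_of_ne hD0 (Ne.symm hDz)
    set t := (PD - A) / D with ht
    set s := Presr / D with hs
    have ht0 : 0 ≤ t := div_nonneg (by linarith) hD0
    have hs0 : 0 ≤ s := div_nonneg hPresr hD0
    have hts : t + s ≤ 1 := by
      rw [ht, hs, ← add_div, div_le_one hDpos]
      linarith
    refine ⟨fun g => a g + t * d g, fun g => s * d g, fun g => ⟨?_, ?_, ?_⟩, ?_, ?_⟩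
    · have := mul_nonneg ht0 (hd0 g)
      simp only [ha]; linarith
    · have h1 : (t + s) * d g ≤ 1 * d g :=
        mul_le_mul_of_nonneg_right hts (hd0 g)
      simp only [ha, hd] at *
      nlinarith
    · exact mul_nonneg hs0 (hd0 g)
    · rw [← Finset.mul_sum, ← hD, hs, div_mul_cancel₀ _ hDz]
    · rw [Finset.sum_add_distrib, ← hA, ← Finset.mul_sum, ← hD, ht,
        div_mul_cancel₀ _ hDz]
      ring
end
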